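/- arXiv:1702.01804 — 8 statements merged into one kernel-verified Lean document; each statement's English description precedes it below -/
import Mathlib

section
/- Let u be a term (built from variables, composition ·, intersection ∩, converse, 1, and ⊤) with associated graph G(u) = (V_u, E_u, ι_u, o_u). Let S be a set and σ an interpretation of variables as binary relations on S. Then for all i, j ∈ S, the pair (i,j) belongs to the relational interpretation of u under σ if and only if there exists a function φ : V_u → S such that φ(ι_u) = i, φ(o_u) = j, and for every edge (p,a,q) ∈ E_u, (φ(p), φ(q)) ∈ σ(a). -/
/-- A 2-pointed labelled directed graph over label set `X`:
a finite vertex type, a set of labelled edges, and distinguished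
input and output vertices. -/
structure PGraph (X : Type) where
  V : Type
  fin : Finite V
  E : Set (V × X × V)
  inp : V
  out : V

/-- A graph homomorphism preserves the input, the output, and labelled edges. -/
def IsHom {X : Type} (G H : PGraph X) (φ : G.V → H.V) : Prop :=
  φ G.inp = H.inp ∧ φ G.out = H.out ∧
    ∀ p a q, (p, a, q) ∈ G.E → (φ p, a, φ q) ∈ H.E

/-- `gle G G'` (written `G ≲ G'`) iff there is a homomorphism from `G'` to `G`. -/
def gle {X : Type} (G G' : PGraph X) : Prop := ∃ φ : G'.V → G.V, IsHom G' G φ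

/-- Graph of a variable: two vertices, one labelled edge from input to output. -/
def gvar {X : Type} (a : X) : PGraph X :=
  ⟨Bool, inferInstance, {(false, a, true)}, false, true⟩

/-- Graph of `1`: one vertex, no edges. -/
def gone {X : Type} : PGraph X := ⟨Unit, inferInstance, ∅, (), ()⟩

/-- Graph of `⊤`: two isolated vertices. -/
def gtop {X : Type} : PGraph X := ⟨Bool, inferInstance, ∅, false, true⟩

/-- Converse of a graph: swap input and output. -/
def gconv {X : Type} (G : PGraph X) : PGraph X := ⟨G.V, G.fin, G.E, G.out, G.inp⟩

/-- Series composition: merge the output of `G` with the input of `H`. -/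
def gseq {X : Type} (G H : PGraph X) : PGraph X :=
  let r : G.V ⊕ H.V → G.V ⊕ H.V → Prop :=
    fun x y => x = Sum.inl G.out ∧ y = Sum.inr H.inp
  { V := Quot r
    fin := by
      have := G.fin; have := H.fin
      exact Finite.of_surjective (Quot.mk r) (fun q => Quot.exists_rep q)
    E := { e | (∃ p a q, (p, a, q) ∈ G.E ∧
                  e = (Quot.mk r (.inl p), a, Quot.mk r (.inl q)))
             ∨ (∃ p a q, (p, a, q) ∈ H.E ∧
                  e = (Quot.mk r (.inr p), a, Quot.mk r (.inr q))) }
    inp := Quot.mk r (.inl G.inp)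
    out := Quot.mk r (.inr H.out) }

/-- Parallel composition: merge the inputs and merge the outputs. -/
def gpar {X : Type} (G H : PGraph X) : PGraph X :=
  let r : G.V ⊕ H.V → G.V ⊕ H.V → Prop :=
    fun x y => (x = Sum.inl G.inp ∧ y = Sum.inr H.inp) ∨
               (x = Sum.inl G.out ∧ y = Sum.inr H.out)
  { V := Quot r
    fin := by
      have := G.fin; have := H.fin
      exact Finite.of_surjective (Quot.mk r) (fun q => Quot.exists_rep q)
    E := { e | (∃ p a q, (p, a, q) ∈ G.E ∧
                  e = (Quot.mk r (.inl p), a, Quot.mk r (.inl q)))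
             ∨ (∃ p a q, (p, a, q) ∈ H.E ∧
                  e = (Quot.mk r (.inr p), a, Quot.mk r (.inr q))) }
    inp := Quot.mk r (.inl G.inp)
    out := Quot.mk r (.inl G.out) }

/-- Terms: variables, composition, intersection, converse, `1` and `⊤`. -/
inductive Trm (X : Type) : Type
  | var : X → Trm X
  | comp : Trm X → Trm X → Trm X
  | inter : Trm X → Trm X → Trm X
  | conv : Trm X → Trm X
  | one : Trm X
  | top : Trm X

/-- The graph of a term. -/
def grOf {X : Type} : Trm X → PGraph X
  | .var a => gvar a
  | .comp u v => gseq (grOf u) (grOf v)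
  | .inter u v => gpar (grOf u) (grOf v)
  | .conv u => gconv (grOf u)
  | .one => gone
  | .top => gtop

/-- Relational interpretation of a term, given an interpretation `σ`
of the variables as binary relations on `S`. -/
def interp {X S : Type} (σ : X → S → S → Prop) : Trm X → S → S → Prop
  | .var a => σ a
  | .comp u v => fun i j => ∃ k, interp σ u i k ∧ interp σ v k j
  | .inter u v => fun i j => interp σ u i j ∧ interp σ v i j
  | .conv u => fun i j => interp σ u j i
  | .one => fun i j => i = j
  | .top => fun _ _ => True

/-! A term holds of `(i, j)` exactly when its graph can be mapped into the relational structure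
`(S, σ)` with input at `i` and output at `j`. Both sides are compositional: sequential
composition of graphs glues one vertex, so maps out of `G(u·v)` are pairs of maps agreeing there
(the witness `k` of the composition being the image of the glued vertex), and parallel
composition glues two vertices, matching the conjunction defining `∩`. -/

namespace PGraph

variable {X S : Type} (σ : X → S → S → Prop)

def RespectsEdges {V : Type} (E : Set (V × X × V)) (φ : V → S) : Prop :=
  ∀ p a q, (p, a, q) ∈ E → σ a (φ p) (φ q)

def Realizes (G : PGraph X) (i j : S) : Prop :=
  ∃ φ : G.V → S, φ G.inp = i ∧ φ G.out = j ∧ RespectsEdges σ G.E φ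

theorem respectsEdges_glued {V W : Type} {r : V ⊕ W → V ⊕ W → Prop}
    (EV : Set (V × X × V)) (EW : Set (W × X × W)) (φ : Quot r → S) :
    RespectsEdges σ { e | (∃ p a q, (p, a, q) ∈ EV ∧
                  e = (Quot.mk r (.inl p), a, Quot.mk r (.inl q)))
             ∨ (∃ p a q, (p, a, q) ∈ EW ∧
                  e = (Quot.mk r (.inr p), a, Quot.mk r (.inr q))) } φ ↔
      RespectsEdges σ EV (φ ∘ Quot.mk r ∘ .inl) ∧
        RespectsEdges σ EW (φ ∘ Quot.mk r ∘ .inr) := by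
  refine ⟨fun h => ⟨fun p a q hE => h _ _ _ (.inl ⟨p, a, q, hE, rfl⟩),
    fun p a q hE => h _ _ _ (.inr ⟨p, a, q, hE, rfl⟩)⟩, ?_⟩
  rintro ⟨hV, hW⟩ _ _ _ (⟨p, a, q, hE, he⟩ | ⟨p, a, q, hE, he⟩) <;> cases he
  exacts [hV _ _ _ hE, hW _ _ _ hE]

variable {σ}

theorem realizes_gvar {a : X} {i j : S} : Realizes σ (gvar a) i j ↔ σ a i j := by
  refine ⟨fun ⟨φ, hi, ho, hE⟩ => hi ▸ ho ▸ hE false a true rfl, fun h => ?_⟩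
  refine ⟨fun b : Bool => cond b j i, rfl, rfl, ?_⟩
  rintro _ _ _ ⟨⟩
  exact h

theorem realizes_gone {i j : S} : Realizes σ gone i j ↔ i = j :=
  ⟨fun ⟨_, hi, ho, _⟩ => hi.symm.trans ho,
    fun h => ⟨fun _ => i, rfl, h, fun _ _ _ => False.elim⟩⟩

theorem realizes_gtop (i j : S) : Realizes σ gtop i j :=
  ⟨fun b : Bool => cond b j i, rfl, rfl, fun _ _ _ => False.elim⟩

theorem realizes_gconv {G : PGraph X} {i j : S} :
    Realizes σ (gconv G) i j ↔ Realizes σ G j i :=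
  ⟨fun ⟨φ, hi, ho, hE⟩ => ⟨φ, ho, hi, hE⟩, fun ⟨φ, hi, ho, hE⟩ => ⟨φ, ho, hi, hE⟩⟩

theorem realizes_gseq {G H : PGraph X} {i j : S} :
    Realizes σ (gseq G H) i j ↔ ∃ k, Realizes σ G i k ∧ Realizes σ H k j := by
  constructor
  · rintro ⟨φ, hi, ho, hE⟩
    obtain ⟨hG, hH⟩ := (respectsEdges_glued σ G.E H.E φ).mp hE
    have glue : φ (Quot.mk _ (.inl G.out)) = φ (Quot.mk _ (.inr H.inp)) :=
      congrArg φ (Quot.sound ⟨rfl, rfl⟩)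
    exact ⟨_, ⟨_, hi, rfl, hG⟩, ⟨_, glue.symm, ho, hH⟩⟩
  · rintro ⟨k, ⟨φ, hφi, hφo, hφE⟩, ⟨ψ, hψi, hψo, hψE⟩⟩
    refine ⟨Quot.lift (Sum.elim φ ψ) ?_, hφi, hψo,
      (respectsEdges_glued σ G.E H.E _).mpr ⟨hφE, hψE⟩⟩
    rintro _ _ ⟨rfl, rfl⟩
    exact hφo.trans hψi.symm

theorem realizes_gpar {G H : PGraph X} {i j : S} :
    Realizes σ (gpar G H) i j ↔ Realizes σ G i j ∧ Realizes σ H i j := by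
  constructor
  · rintro ⟨φ, hi, ho, hE⟩
    obtain ⟨hG, hH⟩ := (respectsEdges_glued σ G.E H.E φ).mp hE
    have glue_inp : φ (Quot.mk _ (.inl G.inp)) = φ (Quot.mk _ (.inr H.inp)) :=
      congrArg φ (Quot.sound (.inl ⟨rfl, rfl⟩))
    have glue_out : φ (Quot.mk _ (.inl G.out)) = φ (Quot.mk _ (.inr H.out)) :=
      congrArg φ (Quot.sound (.inr ⟨rfl, rfl⟩))
    exact ⟨⟨_, hi, ho, hG⟩, ⟨_, glue_inp.symm.trans hi, glue_out.symm.trans ho, hH⟩⟩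
  · rintro ⟨⟨φ, hφi, hφo, hφE⟩, ⟨ψ, hψi, hψo, hψE⟩⟩
    refine ⟨Quot.lift (Sum.elim φ ψ) ?_, hφi, hφo,
      (respectsEdges_glued σ G.E H.E _).mpr ⟨hφE, hψE⟩⟩
    rintro _ _ (⟨rfl, rfl⟩ | ⟨rfl, rfl⟩)
    exacts [hφi.trans hψi.symm, hφo.trans hψo.symm]

end PGraph

open PGraph in
theorem interp_iff_realizes_grOf {X S : Type} (σ : X → S → S → Prop) (u : Trm X) (i j : S) :
    interp σ u i j ↔ Realizes σ (grOf u) i j := by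
  induction u generalizing i j with
  | var a => simp only [interp, grOf, realizes_gvar]
  | comp u v ihu ihv => simp only [interp, grOf, realizes_gseq, ihu, ihv]
  | inter u v ihu ihv => simp only [interp, grOf, realizes_gpar, ihu, ihv]
  | conv u ihu => simp only [interp, grOf, realizes_gconv, ihu]
  | one => simp only [interp, grOf, realizes_gone]
  | top => simp only [interp, grOf, realizes_gtop]

/-- Andréka–Bredikhin lemma: `(i,j)` is in the relational interpretation of
a term `u` iff there is a map from the vertices of `G(u)` to `S` sending the
input to `i`, the output to `j`, and every edge into the interpretation of
its label. -/
theorem andreka_bredikhin {X S : Type} (σ : X → S → S → Prop) (u : Trm X) (i j : S) :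
    interp σ u i j ↔
      ∃ φ : (grOf u).V → S, φ (grOf u).inp = i ∧ φ (grOf u).out = j ∧
        ∀ p a q, (p, a, q) ∈ (grOf u).E → σ a (φ p) (φ q) :=
  interp_iff_realizes_grOf σ u i j
end

section
/- For all terms u and v, the inequation u ≤ v holds in all algebras of binary relations (i.e., for every set S and every interpretation σ of variables as binary relations on S, σ̂(u) ⊆ σ̂(v)) if and only if there exists a graph homomorphism from G(v) to G(u). -/
/-!
A term `u` holds between `i` and `j` exactly when its graph `G(u)` admits a labelling of its
vertices by elements of `S` sending input to `i`, output to `j` and every `a`-edge into `σ a`.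
Labellings pull back along homomorphisms, which gives one direction. Conversely, `G(u)`
interpreted by its own edge relation is a generic model of `u` (the identity labelling), and a
labelling of `G(v)` in that model is literally a homomorphism `G(v) → G(u)`.
-/

namespace PGraph

variable {X S : Type}

def Eval (G : PGraph X) (σ : X → S → S → Prop) (i j : S) : Prop :=
  ∃ ρ : G.V → S, ρ G.inp = i ∧ ρ G.out = j ∧ ∀ p a q, (p, a, q) ∈ G.E → σ a (ρ p) (ρ q)

def edgeRel (G : PGraph X) : X → G.V → G.V → Prop := fun a p q => (p, a, q) ∈ G.E

theorem eval_edgeRel_iff_gle (G H : PGraph X) : H.Eval G.edgeRel G.inp G.out ↔ gle G H :=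
  Iff.rfl

theorem eval_edgeRel_self (G : PGraph X) : G.Eval G.edgeRel G.inp G.out :=
  ⟨id, rfl, rfl, fun _ _ _ h => h⟩

theorem Eval.of_isHom {G H : PGraph X} {φ : G.V → H.V} (hφ : IsHom G H φ)
    {σ : X → S → S → Prop} {i j : S} (h : H.Eval σ i j) : G.Eval σ i j := by
  obtain ⟨hφi, hφo, hφe⟩ := hφ
  obtain ⟨ρ, hi, ho, he⟩ := h
  exact ⟨ρ ∘ φ, by simp [hφi, hi], by simp [hφo, ho], fun p a q h => he _ _ _ (hφe p a q h)⟩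

variable (σ : X → S → S → Prop) (i j : S)

theorem eval_gvar (a : X) : (gvar a).Eval σ i j ↔ σ a i j := by
  constructor
  · rintro ⟨ρ, rfl, rfl, he⟩
    exact he false a true rfl
  · intro h
    refine ⟨fun b : Bool => if b then j else i, rfl, rfl, ?_⟩
    rintro p b q ⟨⟩
    exact h

theorem eval_gone : (gone : PGraph X).Eval σ i j ↔ i = j := by
  constructor
  · rintro ⟨ρ, rfl, rfl, -⟩
    rfl
  · rintro rfl
    exact ⟨fun _ => i, rfl, rfl, fun _ _ _ h => h.elim⟩

theorem eval_gtop : (gtop : PGraph X).Eval σ i j :=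
  ⟨fun b : Bool => if b then j else i, rfl, rfl, fun _ _ _ h => h.elim⟩

theorem eval_gconv (G : PGraph X) : (gconv G).Eval σ i j ↔ G.Eval σ j i :=
  ⟨fun ⟨ρ, hi, ho, he⟩ => ⟨ρ, ho, hi, he⟩, fun ⟨ρ, hi, ho, he⟩ => ⟨ρ, ho, hi, he⟩⟩

theorem eval_gseq (G H : PGraph X) :
    (gseq G H).Eval σ i j ↔ ∃ k, G.Eval σ i k ∧ H.Eval σ k j := by
  constructor
  · rintro ⟨ρ, hi, ho, he⟩
    refine ⟨ρ (Quot.mk _ (.inl G.out)),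
      ⟨fun x => ρ (Quot.mk _ (.inl x)), hi, rfl, fun p a q h => he _ _ _ (.inl ⟨p, a, q, h, rfl⟩)⟩,
      ⟨fun x => ρ (Quot.mk _ (.inr x)), ?_, ho, fun p a q h => he _ _ _ (.inr ⟨p, a, q, h, rfl⟩)⟩⟩
    exact congrArg ρ (Quot.sound ⟨rfl, rfl⟩).symm
  · rintro ⟨k, ⟨ρ₁, h₁i, h₁o, h₁e⟩, ⟨ρ₂, h₂i, h₂o, h₂e⟩⟩
    refine ⟨Quot.lift (Sum.elim ρ₁ ρ₂) ?_, h₁i, h₂o, ?_⟩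
    · rintro x y ⟨rfl, rfl⟩
      simp [h₁o, h₂i]
    · rintro p a q (⟨p', a', q', h, ⟨⟩⟩ | ⟨p', a', q', h, ⟨⟩⟩)
      · exact h₁e _ _ _ h
      · exact h₂e _ _ _ h

theorem eval_gpar (G H : PGraph X) :
    (gpar G H).Eval σ i j ↔ G.Eval σ i j ∧ H.Eval σ i j := by
  constructor
  · rintro ⟨ρ, hi, ho, he⟩
    refine ⟨⟨fun x => ρ (Quot.mk _ (.inl x)), hi, ho,
        fun p a q h => he _ _ _ (.inl ⟨p, a, q, h, rfl⟩)⟩,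
      ⟨fun x => ρ (Quot.mk _ (.inr x)), ?_, ?_,
        fun p a q h => he _ _ _ (.inr ⟨p, a, q, h, rfl⟩)⟩⟩
    · exact (congrArg ρ (Quot.sound (.inl ⟨rfl, rfl⟩))).symm.trans hi
    · exact (congrArg ρ (Quot.sound (.inr ⟨rfl, rfl⟩))).symm.trans ho
  · rintro ⟨⟨ρ₁, h₁i, h₁o, h₁e⟩, ⟨ρ₂, h₂i, h₂o, h₂e⟩⟩
    refine ⟨Quot.lift (Sum.elim ρ₁ ρ₂) ?_, h₁i, h₁o, ?_⟩
    · rintro x y (⟨rfl, rfl⟩ | ⟨rfl, rfl⟩) <;> simp [h₁i, h₂i, h₁o, h₂o]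
    · rintro p a q (⟨p', a', q', h, ⟨⟩⟩ | ⟨p', a', q', h, ⟨⟩⟩)
      · exact h₁e _ _ _ h
      · exact h₂e _ _ _ h

end PGraph

open PGraph in
theorem interp_iff_eval_grOf {X S : Type} (σ : X → S → S → Prop) (u : Trm X) (i j : S) :
    interp σ u i j ↔ (grOf u).Eval σ i j := by
  induction u generalizing i j with
  | var a => exact (eval_gvar σ i j a).symm
  | comp u v ihu ihv =>
    simp only [interp, grOf, eval_gseq, ihu, ihv]
  | inter u v ihu ihv =>
    simp only [interp, grOf, eval_gpar, ihu, ihv]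
  | conv u ihu =>
    simp only [interp, grOf, eval_gconv, ihu]
  | one => exact (eval_gone σ i j).symm
  | top => exact iff_of_true trivial (eval_gtop σ i j)

/-- `u ≤ v` is valid in all algebras of binary relations iff there is a
graph homomorphism from `G(v)` to `G(u)`. -/
theorem rel_le_iff_hom {X : Type} (u v : Trm X) :
    (∀ (S : Type) (σ : X → S → S → Prop) (i j : S), interp σ u i j → interp σ v i j) ↔
      ∃ φ : (grOf v).V → (grOf u).V, IsHom (grOf v) (grOf u) φ := by
  constructor
  · intro h
    have hu := (interp_iff_eval_grOf _ u _ _).mpr (grOf u).eval_edgeRel_self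
    exact ((grOf u).eval_edgeRel_iff_gle (grOf v)).mp
      ((interp_iff_eval_grOf _ v _ _).mp (h _ _ _ _ hu))
  · rintro ⟨φ, hφ⟩ S σ i j h
    exact (interp_iff_eval_grOf σ v i j).mpr
      (((interp_iff_eval_grOf σ u i j).mp h).of_isHom hφ)
end

section
/- For all expressions e and f, the following are equivalent: (i) e ≤ f holds in all relation algebras (for every relational interpretation σ, σ̂(e) ⊆ σ̂(f)); (ii) every term of e is below some term of f in the term preorder, i.e., Trm(e) ⊆ ⌊Trm(f)⌋; (iii) every graph of e is below some graph of f modulo homomorphism, i.e., G(e) ⊆ ⌊G(f)⌋. -/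
/-- Expressions: terms extended with `0`, union and strict iteration. -/
inductive Expr (X : Type) : Type
  | var : X → Expr X
  | comp : Expr X → Expr X → Expr X
  | inter : Expr X → Expr X → Expr X
  | plus : Expr X → Expr X → Expr X
  | iter : Expr X → Expr X
  | conv : Expr X → Expr X
  | zero : Expr X
  | one : Expr X
  | top : Expr X

/-- The set of terms of an expression. -/
def trms {X : Type} : Expr X → Set (Trm X)
  | .var a => {Trm.var a}
  | .comp e f => {w | ∃ u ∈ trms e, ∃ v ∈ trms f, w = Trm.comp u v}
  | .inter e f => {w | ∃ u ∈ trms e, ∃ v ∈ trms f, w = Trm.inter u v}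
  | .plus e f => trms e ∪ trms f
  | .iter e => {w | ∃ u, ∃ l : List (Trm X),
      u ∈ trms e ∧ (∀ v ∈ l, v ∈ trms e) ∧ w = l.foldl Trm.comp u}
  | .conv e => {w | ∃ u ∈ trms e, w = Trm.conv u}
  | .zero => ∅
  | .one => {Trm.one}
  | .top => {Trm.top}

/-- Relational interpretation of an expression. -/
def einterp {X S : Type} (σ : X → S → S → Prop) : Expr X → S → S → Prop
  | .var a => σ a
  | .comp e f => fun i j => ∃ k, einterp σ e i k ∧ einterp σ f k j
  | .inter e f => fun i j => einterp σ e i j ∧ einterp σ f i j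
  | .plus e f => fun i j => einterp σ e i j ∨ einterp σ f i j
  | .iter e => Relation.TransGen (einterp σ e)
  | .conv e => fun i j => einterp σ e j i
  | .zero => fun _ _ => False
  | .one => fun i j => i = j
  | .top => fun _ _ => True

/-!
A term `u` holds between `i` and `j` in a structure `σ` iff its graph maps into `σ` with input at
`i` and output at `j` (`interp_iff_sat_grOf`), and an expression denotes the union of its terms
(`einterp_iff_exists_mem_trms`). Hence (ii) gives validity by composing a homomorphism
`G(v) → G(u)` with a map `G(u) → σ`. Conversely, read `G(u)` for a term `u` of `e` as a structure:
there `u`, hence `e`, hence `f`, hence some term `v` of `f` holds between the input and output of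
`G(u)`, and that is a homomorphism `G(v) → G(u)`. (ii) ↔ (iii) is a reindexing.
-/

def Sat {X S : Type} (σ : X → S → S → Prop) (G : PGraph X) (i j : S) : Prop :=
  ∃ ρ : G.V → S, ρ G.inp = i ∧ ρ G.out = j ∧
    ∀ p a q, (p, a, q) ∈ G.E → σ a (ρ p) (ρ q)

def PGraph.edgeRel_s5 {X : Type} (G : PGraph X) (a : X) (p q : G.V) : Prop := (p, a, q) ∈ G.E

theorem sat_edgeRel_iff_gle {X : Type} (G H : PGraph X) :
    Sat G.edgeRel_s5 H G.inp G.out ↔ gle G H :=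
  Iff.rfl

theorem sat_edgeRel_self {X : Type} (G : PGraph X) : Sat G.edgeRel_s5 G G.inp G.out :=
  ⟨id, rfl, rfl, fun _ _ _ h => h⟩

theorem Sat.of_gle {X S : Type} {σ : X → S → S → Prop} {G H : PGraph X} {i j : S}
    (hGH : gle G H) (hG : Sat σ G i j) : Sat σ H i j := by
  obtain ⟨φ, hφi, hφo, hφE⟩ := hGH
  obtain ⟨ρ, hi, hj, hE⟩ := hG
  exact ⟨ρ ∘ φ, by simp [hφi, hi], by simp [hφo, hj], fun p a q h => hE _ _ _ (hφE p a q h)⟩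

section

variable {X S : Type} (σ : X → S → S → Prop)

theorem sat_gvar_iff (a : X) (i j : S) : Sat σ (gvar a) i j ↔ σ a i j := by
  constructor
  · rintro ⟨ρ, rfl, rfl, hE⟩
    exact hE false a true rfl
  · intro h
    refine ⟨fun b => cond b j i, rfl, rfl, ?_⟩
    rintro p b q ⟨⟩
    exact h

theorem sat_gone_iff (i j : S) : Sat σ gone i j ↔ i = j := by
  constructor
  · rintro ⟨ρ, rfl, rfl, -⟩
    rfl
  · rintro rfl
    exact ⟨fun _ => i, rfl, rfl, fun _ _ _ h => h.elim⟩

theorem sat_gtop (i j : S) : Sat σ gtop i j :=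
  ⟨fun b => cond b j i, rfl, rfl, fun _ _ _ h => h.elim⟩

theorem sat_gconv_iff (G : PGraph X) (i j : S) : Sat σ (gconv G) i j ↔ Sat σ G j i :=
  ⟨fun ⟨ρ, hi, hj, hE⟩ => ⟨ρ, hj, hi, hE⟩, fun ⟨ρ, hi, hj, hE⟩ => ⟨ρ, hj, hi, hE⟩⟩

theorem sat_gseq_iff (G H : PGraph X) (i j : S) :
    Sat σ (gseq G H) i j ↔ ∃ k, Sat σ G i k ∧ Sat σ H k j := by
  constructor
  · rintro ⟨ρ, hi, hj, hE⟩
    have hglue : ρ (Quot.mk _ (.inl G.out)) = ρ (Quot.mk _ (.inr H.inp)) :=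
      congrArg ρ (Quot.sound ⟨rfl, rfl⟩)
    exact ⟨_, ⟨fun p => ρ (Quot.mk _ (.inl p)), hi, rfl,
        fun p a q h => hE _ _ _ (Or.inl ⟨p, a, q, h, rfl⟩)⟩,
      ⟨fun p => ρ (Quot.mk _ (.inr p)), hglue.symm, hj,
        fun p a q h => hE _ _ _ (Or.inr ⟨p, a, q, h, rfl⟩)⟩⟩
  · rintro ⟨k, ⟨ρG, hGi, hGo, hGE⟩, ⟨ρH, hHi, hHo, hHE⟩⟩
    refine ⟨Quot.lift (Sum.elim ρG ρH) ?_, hGi, hHo, ?_⟩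
    · rintro _ _ ⟨rfl, rfl⟩
      exact hGo.trans hHi.symm
    · rintro _ _ _ (⟨p, a, q, h, ⟨⟩⟩ | ⟨p, a, q, h, ⟨⟩⟩)
      exacts [hGE _ _ _ h, hHE _ _ _ h]

theorem sat_gpar_iff (G H : PGraph X) (i j : S) :
    Sat σ (gpar G H) i j ↔ Sat σ G i j ∧ Sat σ H i j := by
  constructor
  · rintro ⟨ρ, hi, hj, hE⟩
    have hglue_inp : ρ (Quot.mk _ (.inl G.inp)) = ρ (Quot.mk _ (.inr H.inp)) :=
      congrArg ρ (Quot.sound (Or.inl ⟨rfl, rfl⟩))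
    have hglue_out : ρ (Quot.mk _ (.inl G.out)) = ρ (Quot.mk _ (.inr H.out)) :=
      congrArg ρ (Quot.sound (Or.inr ⟨rfl, rfl⟩))
    exact ⟨⟨fun p => ρ (Quot.mk _ (.inl p)), hi, hj,
        fun p a q h => hE _ _ _ (Or.inl ⟨p, a, q, h, rfl⟩)⟩,
      ⟨fun p => ρ (Quot.mk _ (.inr p)), hglue_inp.symm.trans hi, hglue_out.symm.trans hj,
        fun p a q h => hE _ _ _ (Or.inr ⟨p, a, q, h, rfl⟩)⟩⟩
  · rintro ⟨⟨ρG, hGi, hGo, hGE⟩, ⟨ρH, hHi, hHo, hHE⟩⟩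
    refine ⟨Quot.lift (Sum.elim ρG ρH) ?_, hGi, hGo, ?_⟩
    · rintro _ _ (⟨rfl, rfl⟩ | ⟨rfl, rfl⟩)
      exacts [hGi.trans hHi.symm, hGo.trans hHo.symm]
    · rintro _ _ _ (⟨p, a, q, h, ⟨⟩⟩ | ⟨p, a, q, h, ⟨⟩⟩)
      exacts [hGE _ _ _ h, hHE _ _ _ h]

theorem interp_iff_sat_grOf (u : Trm X) (i j : S) : interp σ u i j ↔ Sat σ (grOf u) i j := by
  induction u generalizing i j with
  | var a => exact (sat_gvar_iff σ a i j).symm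
  | comp u v ihu ihv => simp only [interp, grOf, sat_gseq_iff, ihu, ihv]
  | inter u v ihu ihv => simp only [interp, grOf, sat_gpar_iff, ihu, ihv]
  | conv u ih => simp only [interp, grOf, sat_gconv_iff, ih]
  | one => exact (sat_gone_iff σ i j).symm
  | top => exact iff_of_true trivial (sat_gtop σ i j)

theorem interp_foldl_comp_append_singleton (u v : Trm X) (l : List (Trm X)) (i j : S) :
    interp σ ((l ++ [v]).foldl Trm.comp u) i j ↔
      ∃ k, interp σ (l.foldl Trm.comp u) i k ∧ interp σ v k j := by
  rw [List.foldl_append]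
  rfl

theorem transGen_iff_exists_foldl_comp (T : Set (Trm X)) (i j : S) :
    Relation.TransGen (fun i j => ∃ u ∈ T, interp σ u i j) i j ↔
      ∃ u, ∃ l : List (Trm X), u ∈ T ∧ (∀ v ∈ l, v ∈ T) ∧ interp σ (l.foldl Trm.comp u) i j := by
  constructor
  · intro h
    induction h with
    | single h =>
      obtain ⟨u, hu, hi⟩ := h
      exact ⟨u, [], hu, by simp, hi⟩
    | tail _ hstep ih =>
      obtain ⟨u, l, hu, hl, hi⟩ := ih
      obtain ⟨v, hv, hvi⟩ := hstep
      refine ⟨u, l ++ [v], hu, ?_, (interp_foldl_comp_append_singleton σ u v l _ _).2 ⟨_, hi, hvi⟩⟩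
      simpa [or_imp, forall_and] using ⟨hl, hv⟩
  · rintro ⟨u, l, hu, hl, hi⟩
    induction l using List.reverseRecOn generalizing j with
    | nil => exact .single ⟨u, hu, hi⟩
    | append_singleton l v ih =>
      simp only [List.mem_append, List.mem_singleton, or_imp, forall_and, forall_eq] at hl
      obtain ⟨k, hk, hvk⟩ := (interp_foldl_comp_append_singleton σ u v l i j).1 hi
      exact .tail (ih k hl.1 hk) ⟨v, hl.2, hvk⟩

theorem einterp_iff_exists_mem_trms (e : Expr X) (i j : S) :
    einterp σ e i j ↔ ∃ u ∈ trms e, interp σ u i j := by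
  induction e generalizing i j with
  | var a => simp [einterp, trms, interp]
  | comp e f ihe ihf =>
    simp only [einterp, trms, ihe, ihf, Set.mem_ofPred_eq]
    constructor
    · rintro ⟨k, ⟨u, hu, hui⟩, ⟨v, hv, hvi⟩⟩
      exact ⟨.comp u v, ⟨u, hu, v, hv, rfl⟩, k, hui, hvi⟩
    · rintro ⟨_, ⟨u, hu, v, hv, rfl⟩, k, hui, hvi⟩
      exact ⟨k, ⟨u, hu, hui⟩, ⟨v, hv, hvi⟩⟩
  | inter e f ihe ihf =>
    simp only [einterp, trms, ihe, ihf, Set.mem_ofPred_eq]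
    constructor
    · rintro ⟨⟨u, hu, hui⟩, ⟨v, hv, hvi⟩⟩
      exact ⟨.inter u v, ⟨u, hu, v, hv, rfl⟩, hui, hvi⟩
    · rintro ⟨_, ⟨u, hu, v, hv, rfl⟩, hui, hvi⟩
      exact ⟨⟨u, hu, hui⟩, ⟨v, hv, hvi⟩⟩
  | plus e f ihe ihf => simp only [einterp, trms, ihe, ihf, Set.mem_union, or_and_right, exists_or]
  | iter e ihe =>
    have hrel : einterp σ e = fun i j => ∃ u ∈ trms e, interp σ u i j :=
      funext₂ fun i j => propext (ihe i j)
    simp only [einterp, trms, hrel, transGen_iff_exists_foldl_comp, Set.mem_ofPred_eq]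
    constructor
    · rintro ⟨u, l, hu, hl, hi⟩
      exact ⟨_, ⟨u, l, hu, hl, rfl⟩, hi⟩
    · rintro ⟨_, ⟨u, l, hu, hl, rfl⟩, hi⟩
      exact ⟨u, l, hu, hl, hi⟩
  | conv e ihe => simp [einterp, trms, ihe, interp]
  | zero => simp [einterp, trms]
  | one => simp [einterp, trms, interp]
  | top => simp [einterp, trms, interp]

end

/-- The three characterisations of `Rel ⊨ e ≤ f`:
validity under all relational interpretations, containment of term sets
modulo the term preorder, and containment of graph sets modulo homomorphism. -/
theorem rel_le_tfae {X : Type} (e f : Expr X) :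
    ((∀ (S : Type) (σ : X → S → S → Prop) (i j : S),
        einterp σ e i j → einterp σ f i j) ↔
      (∀ u ∈ trms e, ∃ v ∈ trms f, gle (grOf u) (grOf v)))
    ∧ ((∀ u ∈ trms e, ∃ v ∈ trms f, gle (grOf u) (grOf v)) ↔
      (∀ G ∈ grOf '' trms e, ∃ H ∈ grOf '' trms f, gle G H)) := by
  refine ⟨⟨fun hrel u hu => ?_, fun hgle S σ i j he => ?_⟩, by simp⟩
  · let G := grOf u
    have he : einterp G.edgeRel_s5 e G.inp G.out :=
      (einterp_iff_exists_mem_trms _ e _ _).2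
        ⟨u, hu, (interp_iff_sat_grOf _ u _ _).2 (sat_edgeRel_self G)⟩
    obtain ⟨v, hv, hvi⟩ := (einterp_iff_exists_mem_trms _ f _ _).1 (hrel _ _ _ _ he)
    exact ⟨v, hv, (sat_edgeRel_iff_gle G _).1 ((interp_iff_sat_grOf _ v _ _).1 hvi)⟩
  · obtain ⟨u, hu, hui⟩ := (einterp_iff_exists_mem_trms σ e i j).1 he
    obtain ⟨v, hv, huv⟩ := hgle u hu
    exact (einterp_iff_exists_mem_trms σ f i j).2
      ⟨v, hv, (interp_iff_sat_grOf σ v i j).2 (((interp_iff_sat_grOf σ u i j).1 hui).of_gle huv)⟩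
end

section
/- The equation (a+b)* · b · (a+b)* = (a* · b · a*)⁺ is valid in all algebras of binary relations: for every set S and all binary relations A, B on S, (A∪B)* ∘ B ∘ (A∪B)* equals the transitive closure of A* ∘ B ∘ A*, where ∘ is relation composition and * is reflexive-transitive closure. -/
/-! Write `U = A ∪ B` and `C = A* B A*`. Since `C` is closed under composing with `A` on either side
and `B ⊆ C`, the transitive closure `C⁺` absorbs `U*` on either side, so `U* B U* ⊆ U* C⁺ U* = C⁺`.
Conversely `C ⊆ U* B U*`, and `U* B U* ∘ C ⊆ U* B U*` because `B ⊆ U*`. -/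

open Relation

namespace Relation

variable {α : Type*} {r s : α → α → Prop} {a b c : α}

theorem TransGen.tail_of_comp_le (hrs : ∀ {a b c}, r a b → s b c → r a c)
    (hab : TransGen r a b) (hbc : s b c) : TransGen r a c := by
  cases hab with
  | single h => exact .single (hrs h hbc)
  | tail hab' h => exact hab'.tail (hrs h hbc)

theorem TransGen.head_of_comp_le (hsr : ∀ {a b c}, s a b → r b c → r a c)
    (hab : s a b) (hbc : TransGen r b c) : TransGen r a c := by
  obtain ⟨d, hbd, hdc⟩ := TransGen.head'_iff.mp hbc
  exact .head' (hsr hab hbd) hdc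

end Relation

section StarSandwich

variable {S : Type} (A B : S → S → Prop)

def starSandwich : S → S → Prop :=
  Comp (Comp (ReflTransGen A) B) (ReflTransGen A)

def unionStarSandwich : S → S → Prop :=
  Comp (Comp (ReflTransGen fun x y => A x y ∨ B x y) B) (ReflTransGen fun x y => A x y ∨ B x y)

variable {A B} {x y z : S}

theorem starSandwich_of_right (h : B x y) : starSandwich A B x y :=
  ⟨y, ⟨x, .refl, h⟩, .refl⟩

theorem starSandwich_tail (h : starSandwich A B x y) (hA : A y z) : starSandwich A B x z :=
  let ⟨w, hxw, hwy⟩ := h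
  ⟨w, hxw, hwy.tail hA⟩

theorem starSandwich_head (hA : A x y) (h : starSandwich A B y z) : starSandwich A B x z :=
  let ⟨w, ⟨v, hyv, hvw⟩, hwz⟩ := h
  ⟨w, ⟨v, hyv.head hA, hvw⟩, hwz⟩

theorem transGen_starSandwich_tail (h : TransGen (starSandwich A B) x y)
    (hU : ReflTransGen (fun x y => A x y ∨ B x y) y z) : TransGen (starSandwich A B) x z := by
  induction hU with
  | refl => exact h
  | tail _ hstep ih =>
    rcases hstep with hA | hB
    · exact ih.tail_of_comp_le starSandwich_tail hA
    · exact ih.tail (starSandwich_of_right hB)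

theorem transGen_starSandwich_head (hU : ReflTransGen (fun x y => A x y ∨ B x y) x y)
    (h : TransGen (starSandwich A B) y z) : TransGen (starSandwich A B) x z := by
  induction hU using ReflTransGen.head_induction_on with
  | refl => exact h
  | head hstep _ ih =>
    rcases hstep with hA | hB
    · exact .head_of_comp_le starSandwich_head hA ih
    · exact ih.head (starSandwich_of_right hB)

theorem reflTransGen_or_left (h : ReflTransGen A x y) :
    ReflTransGen (fun x y => A x y ∨ B x y) x y :=
  ReflTransGen.mono (fun _ _ => Or.inl) x y h

theorem starSandwich_le_unionStarSandwich (h : starSandwich A B x y) :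
    unionStarSandwich A B x y :=
  let ⟨w, ⟨v, hxv, hvw⟩, hwy⟩ := h
  ⟨w, ⟨v, reflTransGen_or_left hxv, hvw⟩, reflTransGen_or_left hwy⟩

theorem unionStarSandwich_trans_starSandwich (h : unionStarSandwich A B x y)
    (hC : starSandwich A B y z) : unionStarSandwich A B x z := by
  obtain ⟨w, ⟨u, hxu, huw⟩, hwy⟩ := h
  obtain ⟨w', ⟨v, hyv, hvw'⟩, hw'z⟩ := hC
  have hxv : ReflTransGen (fun x y => A x y ∨ B x y) x v :=
    (hxu.tail (Or.inr huw)).trans (hwy.trans (reflTransGen_or_left hyv))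
  exact ⟨w', ⟨v, hxv, hvw'⟩, reflTransGen_or_left hw'z⟩

end StarSandwich

/-- `(a+b)* · b · (a+b)* = (a* · b · a*)⁺` is valid in all algebras of
binary relations. -/
theorem stmt7 {S : Type} (A B : S → S → Prop) :
    Relation.Comp
        (Relation.Comp (Relation.ReflTransGen fun x y => A x y ∨ B x y) B)
        (Relation.ReflTransGen fun x y => A x y ∨ B x y)
      =
    Relation.TransGen
      (Relation.Comp (Relation.Comp (Relation.ReflTransGen A) B)
        (Relation.ReflTransGen A)) := by
  funext x y
  apply propext
  constructor
  · rintro ⟨w, ⟨v, hxv, hvw⟩, hwy⟩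
    exact transGen_starSandwich_tail
      (transGen_starSandwich_head hxv (.single (starSandwich_of_right hvw))) hwy
  · intro h
    induction h with
    | single hC => exact starSandwich_le_unionStarSandwich hC
    | tail _ hC ih => exact unionStarSandwich_trans_starSandwich ih hC
end

section
/- The inequation a* ≤ 1 ∪ a ∘ aᵒ ∘ a⁺ is valid in all algebras of binary relations: for every set S and every binary relation A on S, the reflexive-transitive closure A* is contained in the union of the identity relation with A ∘ Aᵒ ∘ A⁺, where Aᵒ is the converse of A. -/
/-- `a* ≤ 1 ∪ a·aᵒ·a⁺` is valid in all algebras of binary relations. -/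
theorem stmt8 {S : Type} (A : S → S → Prop) (x y : S) :
    Relation.ReflTransGen A x y →
      x = y ∨ Relation.Comp (Relation.Comp A (flip A)) (Relation.TransGen A) x y := by
  intro h
  rcases Relation.ReflTransGen.cases_head h with h | ⟨z, hxz, hzy⟩
  · exact Or.inl h
  · exact Or.inr ⟨x, ⟨z, hxz, hxz⟩, Relation.TransGen.head' hxz hzy⟩
end

section
/- The inequation a⁺ ∩ 1 ≤ (a·a)⁺ is valid in all algebras of binary relations: for every set S and every binary relation A on S, the intersection of the transitive closure A⁺ with the identity relation is contained in the transitive closure of A ∘ A. -/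
/-!
Split a path of `A`-steps into pairs of consecutive steps. Reading from the start, an `A`-cycle
through `x` is either a path of `A ∘ A`-steps or such a path followed by one last `A`-step; reading
from the end, it is either a path of `A ∘ A`-steps or one first `A`-step followed by such a path.
If both readings leave a single step over, going around the cycle twice pairs the last step of the
first round with the first step of the second.
-/

namespace Relation

variable {S : Type*} {A : S → S → Prop} {x y : S}

theorem TransGen.comp_self_or_tail (h : TransGen A x y) :
    TransGen (Comp A A) x y ∨ ∃ z, ReflTransGen (Comp A A) x z ∧ A z y := by
  induction h with
  | single hxy => exact .inr ⟨x, .refl, hxy⟩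
  | tail _ hbc ih =>
    rcases ih with heven | ⟨z, hxz, hzb⟩
    · exact .inr ⟨_, heven.to_reflTransGen, hbc⟩
    · exact .inl (TransGen.tail' hxz ⟨_, hzb, hbc⟩)

theorem TransGen.comp_self_or_head (h : TransGen A x y) :
    TransGen (Comp A A) x y ∨ ∃ w, A x w ∧ ReflTransGen (Comp A A) w y := by
  induction h using TransGen.head_induction_on with
  | single hxy => exact .inr ⟨y, hxy, .refl⟩
  | head hab _ ih =>
    rcases ih with heven | ⟨w, hbw, hwy⟩
    · exact .inr ⟨_, hab, heven.to_reflTransGen⟩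
    · exact .inl (TransGen.head' ⟨_, hab, hbw⟩ hwy)

end Relation

open Relation

/-- `a⁺ ∩ 1 ≤ (a·a)⁺` is valid in all algebras of binary relations. -/
theorem stmt10 {S : Type} (A : S → S → Prop) (x y : S) :
    Relation.TransGen A x y → x = y → Relation.TransGen (Relation.Comp A A) x y := by
  rintro h rfl
  rcases h.comp_self_or_tail with heven | ⟨z, hxz, hzx⟩
  · exact heven
  rcases h.comp_self_or_head with heven | ⟨w, hxw, hwx⟩
  · exact heven
  exact (TransGen.tail' hxz ⟨x, hzx, hxw⟩).trans_left hwx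
end

section
/- The equation (a∩1)·b = b·(a∩1) is valid in all algebras of formal languages (where · is language concatenation, ∩ is intersection, and 1 = {ε}), but it is not valid in all algebras of binary relations: there exist a set S and binary relations A, B on S such that (A ∩ id) ∘ B ≠ B ∘ (A ∩ id). -/
/-- Intersection of languages. -/
def langInter {A : Type} (L M : Language A) : Language A := {w | w ∈ L ∧ w ∈ M}

/-- `(a∩1)·b = b·(a∩1)` is valid in all algebras of formal languages, but not
in all algebras of binary relations. -/
theorem stmt12 :
    (∀ (A : Type) (L M : Language A),
        langInter L 1 * M = M * langInter L 1)
    ∧ ∃ (S : Type) (R B : S → S → Prop),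
        Relation.Comp (fun x y => R x y ∧ x = y) B ≠
          Relation.Comp B (fun x y => R x y ∧ x = y) := by
  constructor
  · intro A L M
    ext w
    simp only [Language.mem_mul, langInter, Set.mem_setOf_eq, Language.mem_one]
    constructor
    · rintro ⟨a, ⟨hL, rfl⟩, b, hb, rfl⟩
      exact ⟨b, hb, [], ⟨hL, rfl⟩, by simp⟩
    · rintro ⟨a, ha, b, ⟨hL, rfl⟩, rfl⟩
      exact ⟨[], ⟨hL, rfl⟩, a, ha, by simp⟩
  · refine ⟨Bool, fun x y => x = true ∧ y = true, fun _ _ => True, fun h => ?_⟩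
    have h1 : Relation.Comp (fun x y => ((x = true ∧ y = true) ∧ x = y))
        (fun _ _ => True) false true ↔
        Relation.Comp (fun _ _ => True)
        (fun x y => ((x = true ∧ y = true) ∧ x = y)) false true := by rw [h]
    simp [Relation.Comp] at h1
end

section
/- Every accepting run of a Petri automaton satisfying the safety and series-parallel constraints is proper: its last transition is the unique final transition fired (a transition with empty output appears exactly once, at the last step, reaching the empty state). Equivalently, in the trace graph of the run, the vertex corresponding to transition i is a sink if and only if transition i has empty output, and since the trace is series-parallel it has a single sink, which must be the last transition. -/
/-- Simple terms: variables, composition and intersection only. -/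
inductive STrm (X : Type) : Type
  | var : X → STrm X
  | comp : STrm X → STrm X → STrm X
  | inter : STrm X → STrm X → STrm X

/-- The (series-parallel) graph of a simple term. -/
def sgrOf {X : Type} : STrm X → PGraph X
  | .var a => gvar a
  | .comp u v => gseq (sgrOf u) (sgrOf v)
  | .inter u v => gpar (sgrOf u) (sgrOf v)

/-- A transition of a Petri automaton: a set of input places and a set of
labelled output places. -/
structure Transition (Y P : Type) where
  inp : Set P
  out : Set (Y × P)

/-- The set of places appearing in the output of a transition. -/
def outPlaces {Y P : Type} (t : Transition Y P) : Set P := {p | ∃ a, (a, p) ∈ t.out}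

/-- A Petri automaton: a set of transitions (each with nonempty input)
over a (finite) set of places, with an initial place. -/
structure PetriAut (Y P : Type) where
  trans : Set (Transition Y P)
  init : P
  inp_nonempty : ∀ t ∈ trans, t.inp.Nonempty

/-- Firing transition `t` from state `S`. -/
def fire {Y P : Type} (t : Transition Y P) (S : Set P) : Set P :=
  (S \ t.inp) ∪ outPlaces t

/-- `IsRun A S ts S'`: firing the transitions `ts` in sequence from state `S`
is possible in `A` and leads to state `S'`. -/
def IsRun {Y P : Type} (A : PetriAut Y P) :
    Set P → List (Transition Y P) → Set P → Prop
  | S, [], S' => S = S'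
  | S, t :: ts, S' => t ∈ A.trans ∧ t.inp ⊆ S ∧ IsRun A (fire t S) ts S'

/-- The `k`-th intermediate state of the run firing `ts` from `S`. -/
def runStates {Y P : Type} : Set P → List (Transition Y P) → ℕ → Set P
  | S, _, 0 => S
  | S, [], _ + 1 => S
  | S, t :: ts, k + 1 => runStates (fire t S) ts k

/-- The trace graph of an accepting run firing the nonempty list of
transitions `ts`: vertices are the transition indices, with an edge
`(k, a, l)` whenever `(a,p)` is an output of `t_k` and `l` is the least
index `> k` whose transition consumes `p`; the input is vertex `0` and
the output is the last vertex. -/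
def traceGraph {Y P : Type} (ts : List (Transition Y P)) (h : ts ≠ []) : PGraph Y where
  V := Fin ts.length
  fin := inferInstance
  E := { e | ∃ (k l : Fin ts.length) (a : Y) (p : P),
          (a, p) ∈ (ts.get k).out ∧ (k : ℕ) < (l : ℕ) ∧ p ∈ (ts.get l).inp ∧
          (∀ m : Fin ts.length, (k : ℕ) < (m : ℕ) → (m : ℕ) < (l : ℕ) →
            p ∉ (ts.get m).inp) ∧
          e = (k, a, l) }
  inp := ⟨0, List.length_pos_iff.mpr h⟩
  out := ⟨ts.length - 1, by have := List.length_pos_iff.mpr h; omega⟩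

/-- Graph isomorphism: a bijective homomorphism reflecting edges. -/
def IsIso {X : Type} (G H : PGraph X) : Prop :=
  ∃ φ : G.V → H.V, IsHom G H φ ∧ Function.Bijective φ ∧
    ∀ p a q, (φ p, a, φ q) ∈ H.E → (p, a, q) ∈ G.E

/-- A graph is series-parallel iff it is (isomorphic to) the graph of a
simple term. -/
def SeriesParallel {X : Type} (G : PGraph X) : Prop :=
  ∃ u : STrm X, IsIso G (sgrOf u)

/-- A state is reachable if some run from the initial state leads to it. -/
def Reachable {Y P : Type} (A : PetriAut Y P) (S : Set P) : Prop :=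
  ∃ ts, IsRun A {A.init} ts S

/-!
A transition with empty output is a sink of the trace graph, since it produces no token for a
later transition to consume. In the graph of a simple term every sink is the output, and this
property is invariant under isomorphism, so a transition with empty output is the last vertex of
a series-parallel trace. Conversely, the last transition of an accepting run reaches the empty
state, so it has empty output.
-/

namespace PGraph

variable {X : Type}

def IsSink (G : PGraph X) (v : G.V) : Prop := ∀ a w, (v, a, w) ∉ G.E

def SinksAreOut (G : PGraph X) : Prop := ∀ v, G.IsSink v → v = G.out

end PGraph

open PGraph

section SeriesParallel

variable {X : Type}

lemma sinksAreOut_gvar (a : X) : (gvar a).SinksAreOut := by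
  rintro (_ | _) hv
  · exact absurd rfl (hv a true)
  · rfl

lemma sinksAreOut_gseq {G H : PGraph X} (hG : G.SinksAreOut) (hH : H.SinksAreOut) :
    (gseq G H).SinksAreOut := by
  have of_inr : ∀ q, (gseq G H).IsSink (Quot.mk _ (.inr q)) →
      (Quot.mk _ (.inr q) : (gseq G H).V) = (gseq G H).out := by
    intro q hq
    rw [hH q fun a w hw => hq a _ (Or.inr ⟨q, a, w, hw, rfl⟩)]
    rfl
  rintro ⟨p | q⟩ hv
  · have hp : p = G.out := hG p fun a w hw => hv a _ (Or.inl ⟨p, a, w, hw, rfl⟩)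
    have glue : (Quot.mk _ (.inl p) : (gseq G H).V) = Quot.mk _ (.inr H.inp) :=
      Quot.sound ⟨congrArg _ hp, rfl⟩
    rw [glue] at hv ⊢
    exact of_inr _ hv
  · exact of_inr q hv

lemma sinksAreOut_gpar {G H : PGraph X} (hG : G.SinksAreOut) (hH : H.SinksAreOut) :
    (gpar G H).SinksAreOut := by
  rintro ⟨p | q⟩ hv
  · rw [hG p fun a w hw => hv a _ (Or.inl ⟨p, a, w, hw, rfl⟩)]
    rfl
  · rw [hH q fun a w hw => hv a _ (Or.inr ⟨q, a, w, hw, rfl⟩)]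
    symm
    exact Quot.sound (Or.inr ⟨rfl, rfl⟩)

lemma sinksAreOut_sgrOf (u : STrm X) : (sgrOf u).SinksAreOut := by
  induction u with
  | var a => exact sinksAreOut_gvar a
  | comp _ _ ihs iht => exact sinksAreOut_gseq ihs iht
  | inter _ _ ihs iht => exact sinksAreOut_gpar ihs iht

lemma IsIso.sinksAreOut {G H : PGraph X} (hiso : IsIso G H) (hH : H.SinksAreOut) :
    G.SinksAreOut := by
  obtain ⟨φ, hhom, hbij, hrefl⟩ := hiso
  intro v hv
  have hφv : H.IsSink (φ v) := by
    intro a w hw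
    obtain ⟨q, rfl⟩ := hbij.2 w
    exact hv a q (hrefl v a q hw)
  exact hbij.1 ((hH _ hφv).trans hhom.2.1.symm)

lemma SeriesParallel.sinksAreOut {G : PGraph X} (hG : SeriesParallel G) : G.SinksAreOut :=
  let ⟨u, hiso⟩ := hG
  hiso.sinksAreOut (sinksAreOut_sgrOf u)

end SeriesParallel

section Runs

variable {Y P : Type}

lemma traceGraph_isSink {ts : List (Transition Y P)} (h : ts ≠ []) (i : Fin ts.length)
    (hout : (ts.get i).out = ∅) : (traceGraph ts h).IsSink i := by
  rintro a w ⟨k, l, b, p, hk, -, -, -, he⟩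
  obtain rfl : i = k := congrArg Prod.fst he
  rw [hout] at hk
  exact hk

lemma IsRun.outPlaces_getLast_subset {A : PetriAut Y P} {S S' : Set P}
    {ts : List (Transition Y P)} (hrun : IsRun A S ts S') (h : ts ≠ []) :
    outPlaces (ts.getLast h) ⊆ S' := by
  induction ts generalizing S with
  | nil => exact absurd rfl h
  | cons t ts ih =>
    obtain ⟨-, -, hrest⟩ := hrun
    cases ts with
    | nil =>
      rw [← show fire t S = S' from hrest]
      exact Set.subset_union_right
    | cons t' ts' =>
      rw [List.getLast_cons (List.cons_ne_nil t' ts')]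
      exact ih hrest _

lemma IsRun.getLast_out_eq_empty {A : PetriAut Y P} {S : Set P}
    {ts : List (Transition Y P)} (hrun : IsRun A S ts ∅) (h : ts ≠ []) :
    (ts.getLast h).out = ∅ :=
  Set.eq_empty_of_forall_notMem fun x hx =>
    hrun.outPlaces_getLast_subset h ⟨x.1, hx⟩

end Runs

theorem accepting_run_proper_general {Y P : Type} (A : PetriAut Y P)
    (hsp : ∀ (ts : List (Transition Y P)) (h : ts ≠ []),
      IsRun A {A.init} ts ∅ → SeriesParallel (traceGraph ts h))
    (ts : List (Transition Y P)) (h : ts ≠ []) (hrun : IsRun A {A.init} ts ∅) :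
    (∀ i : Fin ts.length, (ts.get i).out = ∅ ↔ (i : ℕ) = ts.length - 1) := by
  intro i
  constructor
  · intro hout
    exact congrArg Fin.val ((hsp ts h hrun).sinksAreOut i (traceGraph_isSink h i hout))
  · intro hi
    have hlast := hrun.getLast_out_eq_empty h
    rw [List.getLast_eq_getElem] at hlast
    rwa [show i = ⟨ts.length - 1, by omega⟩ from Fin.ext hi]

/-- In a Petri automaton satisfying the safety constraint and whose accepting
runs all have series-parallel traces, every accepting run is proper: any
transition with empty output is the last one fired. -/
theorem accepting_run_proper {Y P : Type} [Finite P] (A : PetriAut Y P)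
    (hsafe : ∀ S, Reachable A S → ∀ t ∈ A.trans, t.inp ⊆ S →
      (S \ t.inp) ∩ outPlaces t = ∅)
    (hsp : ∀ (ts : List (Transition Y P)) (h : ts ≠ []),
      IsRun A {A.init} ts ∅ → SeriesParallel (traceGraph ts h))
    (ts : List (Transition Y P)) (h : ts ≠ []) (hrun : IsRun A {A.init} ts ∅) :
    (∀ i : Fin ts.length, (ts.get i).out = ∅ ↔ (i : ℕ) = ts.length - 1) :=
  accepting_run_proper_general A hsp ts h hrun
end
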